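/- For 0 < α < 1/2, the one species partition function satisfies lim_{j→∞} (α(1−α))^j · Z^{α,1}(j, 0) = (1−2α)/(1−α)². -/

import Mathlib

open scoped BigOperators Classical
open Filter Topology

noncomputable section

namespace TASEP

/-- The matrix `X₀`: ones on the diagonal and the subdiagonal. -/
def X0 : ℕ → ℕ → ℝ := fun i k => if k = i ∨ k + 1 = i then 1 else 0

/-- The matrix `X₁`: ones on the diagonal and the superdiagonal. -/
def X1 : ℕ → ℕ → ℝ := fun i k => if k = i ∨ k = i + 1 then 1 else 0

/-- The matrix `X₂`: a single one in the `(0,0)` entry. -/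
def X2 : ℕ → ℕ → ℝ := fun i k => if i = 0 ∧ k = 0 then 1 else 0

/-- The matrix associated to a species label (`0` = hole, `1` = first class
particle, `2` = second class particle). -/
def Xmat : Fin 3 → ℕ → ℕ → ℝ
  | 0 => X0
  | 1 => X1
  | 2 => X2

/-- Product of two infinite matrices (well defined here since the relevant
matrices have finitely many nonzero entries in each row and column). -/
def mul (A B : ℕ → ℕ → ℝ) : ℕ → ℕ → ℝ := fun i k => ∑' j, A i j * B j k

/-- The row vector `⟨W_α|`, with `i`-th entry `((1-α)/α)^i`. -/
def W (α : ℝ) : ℕ → ℝ := fun i => ((1 - α) / α) ^ i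

/-- The column vector `|V_β⟩`, with `i`-th entry `((1-β)/β)^i`. -/
def V (β : ℝ) : ℕ → ℝ := fun i => ((1 - β) / β) ^ i

/-- Row vector times matrix. -/
def rowMul (v : ℕ → ℝ) (A : ℕ → ℕ → ℝ) : ℕ → ℝ := fun k => ∑' i, v i * A i k

/-- Matrix times column vector. -/
def colMul (A : ℕ → ℕ → ℝ) (v : ℕ → ℝ) : ℕ → ℝ := fun i => ∑' k, A i k * v k

/-- Row vector times a word of matrices. -/
def rowWord (v : ℕ → ℝ) : List (Fin 3) → ℕ → ℝ
  | [] => v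
  | a :: rest => rowWord (rowMul v (Xmat a)) rest

/-- Matrix element `⟨v| X_{σ₁} ⋯ X_{σ_p} |w⟩` of a word of matrices. -/
def pairing (v : ℕ → ℝ) (word : List (Fin 3)) (w : ℕ → ℝ) : ℝ :=
  ∑' i, rowWord v word i * w i

/-- Weight `w^{α,β}(τ) = ⟨W_α| X_{τ₁} ⋯ X_{τ_L} |V_β⟩` of a configuration. -/
def wt (α β : ℝ) {L : ℕ} (τ : Fin L → Fin 3) : ℝ :=
  pairing (W α) (List.ofFn τ) (V β)

/-- Number of second class particles in a configuration. -/
def numTwos {L : ℕ} (τ : Fin L → Fin 3) : ℕ :=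
  (Finset.univ.filter fun i => τ i = 2).card

/-- `Y L n`: configurations of length `L` with exactly `n` second class particles. -/
def Y (L n : ℕ) : Finset (Fin L → Fin 3) :=
  Finset.univ.filter fun τ => numTwos τ = n

/-- The partition function `Z^{α,β}(L,n)`. -/
def Z (α β : ℝ) (L n : ℕ) : ℝ := ∑ τ ∈ Y L n, wt α β τ

/-- Value of a configuration at the 1-based site `s` (defaulting to `0` off the lattice). -/
def val {L : ℕ} (τ : Fin L → Fin 3) (s : ℕ) : Fin 3 :=
  if h : 1 ≤ s ∧ s ≤ L then τ ⟨s - 1, by omega⟩ else 0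

/-- `E α β L n r sites j` is `E_r(L,n;i₁,…,i_r;j)`: the sum of weights of
configurations in `Y L n` with a first class particle at each of the sites
`i₁,…,i_{r-1}` and a block of `j` consecutive first class particles starting
at site `i_r`. -/
def E (α β : ℝ) (L n r : ℕ) (sites : Fin r → ℕ) (j : ℕ) : ℝ :=
  ∑ τ ∈ (Y L n).filter (fun τ =>
      (∀ m : Fin r, (m : ℕ) + 1 ≠ r → val τ (sites m) = 1) ∧
      (∀ m : Fin r, (m : ℕ) + 1 = r → ∀ t ∈ Finset.range j, val τ (sites m + t) = 1)),
    wt α β τ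

end TASEP

/-! Summing over configurations turns `Z α 1 j 0` into `(Tʲ W_α)₀` for the transfer operator
`v ↦ v (X₀ + X₁)`, i.e. `(T v)ₖ = 2 vₖ + vₖ₊₁ + vₖ₋₁` with `v₋₁ = 0`. For `r = (1 - α)/α` the
vector `dₖ = rᵏ - r^{-(k+2)}` vanishes at the virtual site `-1`, so it is an exact eigenvector of
`T`, with eigenvalue `2 + r + r⁻¹ = 1/(α(1-α))`. Hence `W_α = d + (r^{-(k+2)})ₖ` contributes
`d₀ = (1-2α)/(1-α)²` after rescaling, plus a remainder coming from a vector with entries in `[0, 1]`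
(as `α ≤ 1/2`); since `T` at most quadruples sup norms, that remainder is `O((4α(1-α))ʲ) → 0`. -/

namespace TASEP

def transfer : Module.End ℝ (ℕ → ℝ) where
  toFun v k := 2 * v k + v (k + 1) + if k = 0 then 0 else v (k - 1)
  map_add' u v := by
    ext k
    simp only [Pi.add_apply]
    split_ifs <;> ring
  map_smul' c v := by
    ext k
    simp only [Pi.smul_apply, smul_eq_mul, RingHom.id_apply]
    split_ifs <;> ring

lemma transfer_apply (v : ℕ → ℝ) (k : ℕ) :
    transfer v k = 2 * v k + v (k + 1) + if k = 0 then 0 else v (k - 1) := rfl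

lemma rowMul_X0 (v : ℕ → ℝ) : rowMul v X0 = fun k => v k + v (k + 1) := by
  funext k
  have hsupp : ∀ i ∉ ({k, k + 1} : Finset ℕ), v i * X0 i k = 0 := by
    intro i hi
    simp only [Finset.mem_insert, Finset.mem_singleton, not_or] at hi
    rw [X0, if_neg (by omega), mul_zero]
  rw [rowMul, tsum_eq_sum hsupp, Finset.sum_pair (by omega)]
  simp [X0]

lemma rowMul_X1 (v : ℕ → ℝ) :
    rowMul v X1 = fun k => v k + if k = 0 then 0 else v (k - 1) := by
  funext k
  rcases k with _ | k
  · rw [rowMul, tsum_eq_single 0 fun i hi => by rw [X1, if_neg (by omega), mul_zero]]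
    simp [X1]
  · have hsupp : ∀ i ∉ ({k, k + 1} : Finset ℕ), v i * X1 i (k + 1) = 0 := by
      intro i hi
      simp only [Finset.mem_insert, Finset.mem_singleton, not_or] at hi
      rw [X1, if_neg (by omega), mul_zero]
    rw [rowMul, tsum_eq_sum hsupp, Finset.sum_pair (by omega)]
    simp [X1, add_comm]

lemma rowMul_X0_add_rowMul_X1 (v : ℕ → ℝ) : rowMul v X0 + rowMul v X1 = transfer v := by
  ext k
  rw [Pi.add_apply, rowMul_X0, rowMul_X1, transfer_apply]
  ring

lemma numTwos_cons {L : ℕ} (a : Fin 3) (σ : Fin L → Fin 3) :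
    numTwos (Fin.cons a σ : Fin (L + 1) → Fin 3) = (if a = 2 then 1 else 0) + numTwos σ := by
  simp only [numTwos, Finset.card_filter, Fin.sum_univ_succ, Fin.cons_zero, Fin.cons_succ]

lemma sum_Y_zero_succ {M : Type*} [AddCommMonoid M] (j : ℕ) (f : (Fin (j + 1) → Fin 3) → M) :
    ∑ τ ∈ Y (j + 1) 0, f τ = ∑ σ ∈ Y j 0, (f (Fin.cons 0 σ) + f (Fin.cons 1 σ)) := by
  rw [Y, Y, Finset.sum_filter, Finset.sum_filter,
    ← (Fin.consEquiv fun _ => Fin 3).sum_comp, Fintype.sum_prod_type, Fin.sum_univ_three,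
    ← Finset.sum_add_distrib, ← Finset.sum_add_distrib]
  refine Finset.sum_congr rfl fun σ _ => ?_
  simp only [Fin.consEquiv, Equiv.coe_fn_mk, numTwos_cons]
  split_ifs <;> simp_all

lemma sum_Y_zero_rowWord (j : ℕ) (v : ℕ → ℝ) :
    ∑ τ ∈ Y j 0, rowWord v (List.ofFn τ) = (transfer ^ j) v := by
  induction j generalizing v with
  | zero => simp [Y, numTwos, rowWord]
  | succ j ih =>
    simp only [sum_Y_zero_succ, List.ofFn_succ, Fin.cons_zero, Fin.cons_succ,
      rowWord, Finset.sum_add_distrib, ih, Xmat]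
    rw [← map_add, rowMul_X0_add_rowMul_X1, pow_succ, Module.End.mul_apply]

lemma pairing_V_one (v : ℕ → ℝ) (w : List (Fin 3)) : pairing v w (V 1) = rowWord v w 0 := by
  rw [pairing, tsum_eq_single 0 fun i hi => by simp [V, hi]]
  simp [V]

lemma Z_one_zero_eq_transfer_pow (α : ℝ) (j : ℕ) : Z α 1 j 0 = (transfer ^ j) (W α) 0 := by
  simp only [Z, wt, pairing_V_one, ← Finset.sum_apply, sum_Y_zero_rowWord]

def dirichletMode (r : ℝ) : ℕ → ℝ := fun k => r ^ k - r⁻¹ ^ (k + 2)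

lemma transfer_dirichletMode {r : ℝ} (hr : r ≠ 0) :
    transfer (dirichletMode r) = (2 + r + r⁻¹) • dirichletMode r := by
  ext k
  have hrr : r * r⁻¹ = 1 := mul_inv_cancel₀ hr
  rcases k with _ | k
  · simp only [transfer_apply, dirichletMode, Pi.smul_apply, smul_eq_mul, ↓reduceIte]
    linear_combination r⁻¹ * hrr
  · simp only [transfer_apply, dirichletMode, Pi.smul_apply, smul_eq_mul,
      if_neg k.succ_ne_zero, Nat.add_sub_cancel]
    linear_combination (r⁻¹ ^ (k + 2) - r ^ k) * hrr

lemma transfer_pow_dirichletMode {r : ℝ} (hr : r ≠ 0) (j : ℕ) :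
    (transfer ^ j) (dirichletMode r) = (2 + r + r⁻¹) ^ j • dirichletMode r := by
  induction j with
  | zero => simp
  | succ j ih =>
    rw [pow_succ, Module.End.mul_apply, transfer_dirichletMode hr, map_smul, ih, smul_smul,
      pow_succ']

lemma transfer_pow_apply_mem_Icc {v : ℕ → ℝ} {c : ℝ} (hv : ∀ k, v k ∈ Set.Icc 0 c) (j : ℕ) :
    ∀ k, (transfer ^ j) v k ∈ Set.Icc 0 (4 ^ j * c) := by
  induction j with
  | zero => simpa using hv
  | succ j ih =>
    intro k
    rw [pow_succ' transfer, Module.End.mul_apply, transfer_apply, pow_succ' (4 : ℝ)]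
    have h₀ := ih k
    have h₁ := ih (k + 1)
    have h₂ : (if k = 0 then 0 else (transfer ^ j) v (k - 1)) ∈ Set.Icc 0 (4 ^ j * c) := by
      split_ifs
      · exact ⟨le_rfl, (ih 0).1.trans (ih 0).2⟩
      · exact ih (k - 1)
    simp only [Set.mem_Icc] at *
    constructor <;> linarith

lemma tendsto_pow_mul_transfer_pow_apply {v : ℕ → ℝ} {c x : ℝ} (hv : ∀ k, v k ∈ Set.Icc 0 c)
    (hx₀ : 0 ≤ x) (hx₁ : 4 * x < 1) (k : ℕ) :
    Tendsto (fun j => x ^ j * (transfer ^ j) v k) atTop (𝓝 0) := by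
  have hbound : ∀ j, x ^ j * (transfer ^ j) v k ∈ Set.Icc 0 ((4 * x) ^ j * c) := fun j => by
    obtain ⟨h₀, h₁⟩ := transfer_pow_apply_mem_Icc hv j k
    rw [mul_pow, mul_comm (4 ^ j : ℝ), mul_assoc]
    exact ⟨by positivity, mul_le_mul_of_nonneg_left h₁ (by positivity)⟩
  have hlim : Tendsto (fun j => (4 * x) ^ j * c) atTop (𝓝 0) := by
    simpa using (tendsto_pow_atTop_nhds_zero_of_lt_one (by positivity) hx₁).mul_const c
  exact squeeze_zero (fun j => (hbound j).1) (fun j => (hbound j).2) hlim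

/-- for `0 < α < 1/2`,
`lim_{j→∞} (α(1−α))^j Z^{α,1}(j,0) = (1−2α)/(1−α)²`. -/
theorem Z_one_species_asymptotics (α : ℝ) (hα0 : 0 < α) (hα2 : α < 1 / 2) :
    Filter.Tendsto (fun j : ℕ => (α * (1 - α)) ^ j * Z α 1 j 0)
      Filter.atTop (𝓝 ((1 - 2 * α) / (1 - α) ^ 2)) := by
  have hα1 : 0 < 1 - α := by linarith
  set r := (1 - α) / α with hr_def
  have hr : r ≠ 0 := by positivity
  have hW : W α = dirichletMode r + fun k => r⁻¹ ^ (k + 2) := by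
    ext k
    simp [W, dirichletMode, hr_def]
  have heigen : α * (1 - α) * (2 + r + r⁻¹) = 1 := by
    rw [hr_def]
    field_simp
    ring
  have hmode : dirichletMode r 0 = (1 - 2 * α) / (1 - α) ^ 2 := by
    rw [dirichletMode, hr_def, inv_div, div_pow, div_pow]
    field_simp
    ring
  have hsplit : ∀ j, (α * (1 - α)) ^ j * Z α 1 j 0 = (1 - 2 * α) / (1 - α) ^ 2
      + (α * (1 - α)) ^ j * (transfer ^ j) (fun k => r⁻¹ ^ (k + 2)) 0 := by
    intro j
    rw [Z_one_zero_eq_transfer_pow, hW, map_add, Pi.add_apply, transfer_pow_dirichletMode hr,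
      Pi.smul_apply, smul_eq_mul, mul_add, ← mul_assoc, ← mul_pow, heigen, one_pow, one_mul, hmode]
  have htail : ∀ k, r⁻¹ ^ (k + 2) ∈ Set.Icc (0 : ℝ) 1 := fun k => by
    have : r⁻¹ ∈ Set.Icc (0 : ℝ) 1 := by
      rw [hr_def, inv_div]
      exact ⟨by positivity, (div_le_one hα1).2 (by linarith)⟩
    exact ⟨pow_nonneg this.1 _, pow_le_one₀ this.1 this.2⟩
  have herr := tendsto_pow_mul_transfer_pow_apply (x := α * (1 - α)) htail (by positivity)
    (by nlinarith [sq_nonneg (1 - 2 * α)]) 0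
  simpa only [hsplit, add_zero] using herr.const_add ((1 - 2 * α) / (1 - α) ^ 2)

end TASEP
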